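/- arXiv:1405.7280 — 5 statements merged into one kernel-verified Lean document; each statement's English description precedes it below -/
import Mathlib

section
/- Let X be a real Hilbert space, let f : X → ℝ be locally Lipschitz at a point x̄ ∈ X, and suppose 0 ∉ ∂f(x̄) (Clarke subdifferential). Then the epigraphical map E : X ⇉ ℝ defined by E(x) := [f(x), ∞) is metrically regular at (x̄, f(x̄)); that is, there exist a constant κ ≥ 0, a neighborhood U of x̄ and a neighborhood V of f(x̄) such that d(x, E⁻¹(u)) ≤ κ · d(u, E(x)) for all x ∈ U and u ∈ V, where E⁻¹(u) = {x' ∈ X : f(x') ≤ u}. -/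
open Filter Metric Set
open scoped Topology RealInnerProductSpace NNReal

variable {X : Type*} [NormedAddCommGroup X] [InnerProductSpace ℝ X] [CompleteSpace X]

/-- The Clarke (generalized) directional derivative
`f°(x; d) = limsup_{(y,t) → (x,0⁺)} (f(y + t d) − f(y))/t`. -/
noncomputable def clarkeDirDeriv (f : X → ℝ) (x d : X) : ℝ :=
  Filter.limsup (fun p : X × ℝ => (f (p.1 + p.2 • d) - f p.1) / p.2)
    ((𝓝 x) ×ˢ (𝓝[>] (0 : ℝ)))

/-- The Clarke (generalized) subdifferential
`∂f(x) = {s : ⟪s, d⟫ ≤ f°(x; d) for all d}`. -/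
def clarkeSubdiff (f : X → ℝ) (x : X) : Set X :=
  {s : X | ∀ d : X, ⟪s, d⟫ ≤ clarkeDirDeriv f x d}

/-- `f` is locally Lipschitz at the point `x`. -/
def LocallyLipschitzAt (f : X → ℝ) (x : X) : Prop :=
  ∃ K : ℝ≥0, ∃ U ∈ 𝓝 x, LipschitzOnWith K f U

/-- `f` is approximately convex at `xbar`: for every `ε > 0` there is `δ > 0` with
`f(y) ≥ f(x) + ⟪s, y − x⟫ − ε‖y − x‖` for all `x, y ∈ B(xbar, δ)` and `s ∈ ∂f(x)`. -/
def ApproxConvexAt (f : X → ℝ) (xbar : X) : Prop :=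
  ∀ ε > (0 : ℝ), ∃ δ > (0 : ℝ), ∀ x ∈ Metric.closedBall xbar δ, ∀ y ∈ Metric.closedBall xbar δ,
    ∀ s ∈ clarkeSubdiff f x, f x + ⟪s, y - x⟫ - ε * ‖y - x‖ ≤ f y
/-!
Since `⟪0, d⟫ = 0`, the condition `0 ∉ ∂f(x̄)` yields a direction `d` with `f°(x̄; d) < -c < 0`.
Local Lipschitz continuity keeps the Clarke difference quotients bounded, so the limsup bound
gives a uniform descent `f(y + t d) < f(y) - c t` for `y` near `x̄` and small `t > 0`. For `x`
near `x̄` with `f x > u`, moving from `x` along `d` for time `t = (f x - u)/c` reaches the sublevel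
set `{f ≤ u}` at distance `t ‖d‖ = (‖d‖ / c) · d(u, [f x, ∞))`.
-/

theorem ofReal_sub_le_infEDist_Ici (a u : ℝ) :
    ENNReal.ofReal (a - u) ≤ infEDist u (Ici a) :=
  le_infEDist.2 fun v hv => by
    rw [edist_dist, Real.dist_eq, abs_sub_comm]
    exact ENNReal.ofReal_le_ofReal ((sub_le_sub_right hv u).trans (le_abs_self _))

theorem LocallyLipschitzAt.continuousAt {F : Type*} [NormedAddCommGroup F] {f : F → ℝ} {x : F}
    (hf : LocallyLipschitzAt f x) : ContinuousAt f x :=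
  let ⟨_, _, hU, hL⟩ := hf
  hL.continuousOn.continuousAt hU

section NormedSpace

variable {E : Type*} [NormedAddCommGroup E] [NormedSpace ℝ E]

theorem tendsto_add_smul_nhds_prod_nhdsGT (x d : E) :
    Tendsto (fun p : E × ℝ => p.1 + p.2 • d) (𝓝 x ×ˢ 𝓝[>] 0) (𝓝 x) := by
  have h := (by fun_prop : Continuous fun p : E × ℝ => p.1 + p.2 • d).tendsto' (x, 0) x
    (by simp)
  rw [nhds_prod_eq] at h
  exact h.mono_left (prod_mono le_rfl nhdsWithin_le_nhds)

theorem LocallyLipschitzAt.isBoundedUnder_clarke_quotient {f : E → ℝ} {x : E}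
    (hf : LocallyLipschitzAt f x) (d : E) :
    IsBoundedUnder (· ≤ ·) (𝓝 x ×ˢ 𝓝[>] 0)
      (fun p : E × ℝ => (f (p.1 + p.2 • d) - f p.1) / p.2) := by
  obtain ⟨K, U, hU, hL⟩ := hf
  refine isBoundedUnder_of_eventually_le (a := K * ‖d‖) ?_
  filter_upwards [tendsto_fst.eventually hU, tendsto_add_smul_nhds_prod_nhdsGT x d hU,
    tendsto_snd.eventually self_mem_nhdsWithin] with p hp hpd (hpos : 0 < p.2)
  rw [div_le_iff₀ hpos]
  calc f (p.1 + p.2 • d) - f p.1 ≤ dist (f (p.1 + p.2 • d)) (f p.1) := le_abs_self _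
    _ ≤ K * dist (p.1 + p.2 • d) p.1 := hL.dist_le_mul _ hpd _ hp
    _ = K * ‖d‖ * p.2 := by
      rw [dist_eq_norm, add_sub_cancel_left, norm_smul, Real.norm_of_nonneg hpos.le]; ring

theorem epigraph_metricRegular_of_eventually_descent {f : E → ℝ} {xbar d : E} {c : ℝ}
    (hc : 0 < c) (hf : ContinuousAt f xbar)
    (hdesc : ∀ᶠ p in 𝓝 xbar ×ˢ 𝓝[>] (0 : ℝ), f (p.1 + p.2 • d) < f p.1 - c * p.2) :
    ∃ U ∈ 𝓝 xbar, ∃ V ∈ 𝓝 (f xbar), ∀ x ∈ U, ∀ u ∈ V,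
      infEDist x {x' | f x' ≤ u} ≤ ENNReal.ofReal (‖d‖ / c) * infEDist u (Ici (f x)) := by
  obtain ⟨s, hs, t, ht, hst⟩ := mem_prod_iff.mp hdesc
  obtain ⟨τ, hτ : 0 < τ, hτt⟩ := mem_nhdsGT_iff_exists_Ioo_subset.mp ht
  have hV : ball (f xbar) (c * τ / 2) ∈ 𝓝 (f xbar) := ball_mem_nhds _ (by positivity)
  refine ⟨s ∩ f ⁻¹' ball (f xbar) (c * τ / 2), inter_mem hs (hf hV), _, hV, ?_⟩
  rintro x ⟨hxs, hfx⟩ u hu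
  rcases le_or_gt (f x) u with hxu | hxu
  · rw [infEDist_zero_of_mem (show x ∈ {x' | f x' ≤ u} from hxu)]
    exact zero_le
  set T := (f x - u) / c
  have hcT : c * T = f x - u := mul_div_cancel₀ _ hc.ne'
  have hT : T ∈ Ioo 0 τ := by
    rw [mem_preimage, mem_ball, Real.dist_eq, abs_lt] at hfx
    rw [mem_ball, Real.dist_eq, abs_lt] at hu
    exact ⟨div_pos (sub_pos.2 hxu) hc, by rw [div_lt_iff₀ hc]; linarith⟩
  have hmem : x + T • d ∈ {x' | f x' ≤ u} := by
    have hdescT : f (x + T • d) < f x - c * T := hst (mk_mem_prod hxs (hτt hT))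
    show f (x + T • d) ≤ u
    linarith
  calc infEDist x {x' | f x' ≤ u} ≤ edist x (x + T • d) := infEDist_le_edist_of_mem hmem
    _ = ENNReal.ofReal (‖d‖ / c) * ENNReal.ofReal (f x - u) := by
      rw [edist_dist, dist_self_add_right, norm_smul, Real.norm_of_nonneg hT.1.le,
        ← ENNReal.ofReal_mul (by positivity)]
      congr 1
      simp only [T]
      ring
    _ ≤ ENNReal.ofReal (‖d‖ / c) * infEDist u (Ici (f x)) := by
      gcongr
      exact ofReal_sub_le_infEDist_Ici _ _

end NormedSpace

section Clarke

variable {E : Type*} [NormedAddCommGroup E] [InnerProductSpace ℝ E]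

theorem exists_clarkeDirDeriv_neg {f : E → ℝ} {x : E} (h : (0 : E) ∉ clarkeSubdiff f x) :
    ∃ d, clarkeDirDeriv f x d < 0 := by
  by_contra! h'
  exact h fun d => by simpa only [inner_zero_left] using h' d

theorem LocallyLipschitzAt.eventually_descent {f : E → ℝ} {x d : E} {c : ℝ}
    (hf : LocallyLipschitzAt f x) (hd : clarkeDirDeriv f x d < -c) :
    ∀ᶠ p in 𝓝 x ×ˢ 𝓝[>] (0 : ℝ), f (p.1 + p.2 • d) < f p.1 - c * p.2 := by
  filter_upwards [eventually_lt_of_limsup_lt hd (hf.isBoundedUnder_clarke_quotient d),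
    tendsto_snd.eventually self_mem_nhdsWithin] with p hp (hpos : 0 < p.2)
  rw [div_lt_iff₀ hpos] at hp
  linarith

end Clarke

/-- **Metric regularity of the epigraphical map.** If `f` is locally Lipschitz at `xbar`
and `0 ∉ ∂f(xbar)`, then `E(x) := [f(x), ∞)` is metrically regular at `(xbar, f xbar)`:
there are `κ ≥ 0` and neighborhoods `U` of `xbar`, `V` of `f xbar` with
`d(x, E⁻¹(u)) ≤ κ · d(u, E(x))` for all `x ∈ U`, `u ∈ V`, where
`E⁻¹(u) = {x' : f x' ≤ u}`. -/
theorem metric_regularity_of_epigraphical_map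
    (f : X → ℝ) (xbar : X)
    (hf : LocallyLipschitzAt f xbar)
    (h0 : (0 : X) ∉ clarkeSubdiff f xbar) :
    ∃ κ : ℝ, 0 ≤ κ ∧ ∃ U ∈ 𝓝 xbar, ∃ V ∈ 𝓝 (f xbar),
      ∀ x ∈ U, ∀ u ∈ V,
        EMetric.infEdist x {x' : X | f x' ≤ u} ≤
          ENNReal.ofReal κ * EMetric.infEdist u (Set.Ici (f x)) := by
  obtain ⟨d, hd⟩ := exists_clarkeDirDeriv_neg h0
  obtain ⟨c, hc, hdc⟩ : ∃ c > 0, clarkeDirDeriv f xbar d < -c :=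
    ⟨-clarkeDirDeriv f xbar d / 2, by linarith, by linarith⟩
  exact ⟨‖d‖ / c, by positivity,
    epigraph_metricRegular_of_eventually_descent hc hf.continuousAt (hf.eventually_descent hdc)⟩
end

section
/- Let X be a real Hilbert space, let f : X → ℝ, let d ∈ X and μ > 0 be such that f is locally Lipschitz at x̄ and the Clarke directional derivative satisfies f°(x̄; d) < −μ. Then there exists δ > 0 such that for every x ∈ B(x̄, δ), the vector (d, −μ) belongs to the tangent (contingent) cone to the epigraph epi f := {(x', r) ∈ X × ℝ : r ≥ f(x')} at the point (x, f(x)); that is, there exist sequences t_n ↘ 0, u_n → d and v_n → −μ with (x, f(x)) + t_n·(u_n, v_n) ∈ epi f for all n. -/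
open Filter Metric Set
open scoped Topology RealInnerProductSpace NNReal

variable {X : Type*} [NormedAddCommGroup X] [InnerProductSpace ℝ X] [CompleteSpace X]

/-! Local Lipschitz continuity makes the difference quotients `(f (y + t • d) - f y) / t` bounded
above near `(xbar, 0⁺)`, so `f°(xbar; d) < -μ` forces them to be `< -μ` on a whole product
`B(xbar, δ) × (0, η)`. Hence for every `x ∈ B(xbar, δ)` any sequence `t_n ↘ 0` in `(0, η)`, with the
constant sequences `u_n = d`, `v_n = -μ`, witnesses the tangency. -/

theorem LipschitzOnWith.sub_div_le_mul_norm {E : Type*} [SeminormedAddCommGroup E]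
    [NormedSpace ℝ E] {f : E → ℝ} {K : NNReal} {U : Set E} (hK : LipschitzOnWith K f U)
    {y d : E} {t : ℝ} (hy : y ∈ U) (hyt : y + t • d ∈ U) (ht : 0 < t) :
    (f (y + t • d) - f y) / t ≤ K * ‖d‖ := by
  rw [div_le_iff₀ ht]
  calc f (y + t • d) - f y ≤ dist (f (y + t • d)) (f y) := le_abs_self _
    _ ≤ K * dist (y + t • d) y := hK.dist_le_mul _ hyt _ hy
    _ = K * ‖d‖ * t := by
      rw [dist_eq_norm, add_sub_cancel_left, norm_smul, Real.norm_of_nonneg ht.le]; ring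

omit [CompleteSpace X] in
theorem LocallyLipschitzAt.isBoundedUnder_le_sub_div {f : X → ℝ} {xbar : X}
    (hf : LocallyLipschitzAt f xbar) (d : X) :
    IsBoundedUnder (· ≤ ·) (𝓝 xbar ×ˢ 𝓝[>] (0 : ℝ))
      (fun p : X × ℝ => (f (p.1 + p.2 • d) - f p.1) / p.2) := by
  obtain ⟨K, U, hU, hK⟩ := hf
  have hshift : Tendsto (fun p : X × ℝ => p.1 + p.2 • d) (𝓝 xbar ×ˢ 𝓝[>] (0 : ℝ)) (𝓝 xbar) := by
    have hcont : Tendsto (fun p : X × ℝ => p.1 + p.2 • d) (𝓝 (xbar, 0)) (𝓝 xbar) :=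
      (by fun_prop : Continuous fun p : X × ℝ => p.1 + p.2 • d).tendsto' _ _ (by simp)
    refine hcont.mono_left ?_
    rw [nhds_prod_eq]
    exact Filter.prod_mono le_rfl nhdsWithin_le_nhds
  refine isBoundedUnder_of_eventually_le (a := (K : ℝ) * ‖d‖) ?_
  filter_upwards [tendsto_fst.eventually hU, hshift.eventually hU, tendsto_snd.eventually self_mem_nhdsWithin] with p hy hyt ht
  exact hK.sub_div_le_mul_norm hy hyt ht

omit [CompleteSpace X] in
theorem LocallyLipschitzAt.exists_forall_lt_of_clarkeDirDeriv_lt {f : X → ℝ} {xbar d : X}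
    {a : ℝ} (hf : LocallyLipschitzAt f xbar) (hdd : clarkeDirDeriv f xbar d < a) :
    ∃ δ > (0 : ℝ), ∃ η > (0 : ℝ), ∀ x ∈ closedBall xbar δ, ∀ t ∈ Ioo 0 η,
      f (x + t • d) < f x + t * a := by
  have hev := eventually_lt_of_limsup_lt hdd (hf.isBoundedUnder_le_sub_div d)
  obtain ⟨P, hP, Q, hQ, hPQ⟩ := eventually_prod_iff.1 hev
  obtain ⟨δ, hδ, hδP⟩ := nhds_basis_closedBall.eventually_iff.1 hP
  obtain ⟨η, hη, hηQ⟩ := mem_nhdsGT_iff_exists_Ioo_subset.1 hQ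
  refine ⟨δ, hδ, η, hη, fun x hx t ht => ?_⟩
  have hquot := hPQ (hδP hx) (hηQ ht)
  rw [div_lt_iff₀ ht.1] at hquot
  linarith

theorem mem_tangentCone_epigraph_general
    (f : X → ℝ) (xbar d : X) (μ : ℝ)
    (hf : LocallyLipschitzAt f xbar)
    (hdd : clarkeDirDeriv f xbar d < -μ) :
    ∃ δ > (0 : ℝ), ∀ x ∈ Metric.closedBall xbar δ,
      ∃ (t : ℕ → ℝ) (u : ℕ → X) (v : ℕ → ℝ),
        (∀ n, 0 < t n) ∧ Antitone t ∧ Tendsto t atTop (𝓝 0) ∧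
        Tendsto u atTop (𝓝 d) ∧ Tendsto v atTop (𝓝 (-μ)) ∧
        ∀ n, f (x + t n • u n) ≤ f x + t n * v n := by
  obtain ⟨δ, hδ, η, hη, hlt⟩ := hf.exists_forall_lt_of_clarkeDirDeriv_lt hdd
  refine ⟨δ, hδ, fun x hx => ?_⟩
  obtain ⟨t, hanti, htmem, htlim⟩ := exists_seq_strictAnti_tendsto' hη
  exact ⟨t, fun _ => d, fun _ => -μ, fun n => (htmem n).1, hanti.antitone, htlim,
    tendsto_const_nhds, tendsto_const_nhds, fun n => (hlt x hx (t n) (htmem n)).le⟩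

/-- If `f` is locally Lipschitz at `xbar` and `f°(xbar; d) < −μ` with `μ > 0`, then there
is `δ > 0` such that for every `x ∈ B(xbar, δ)` the vector `(d, −μ)` lies in the
contingent (tangent) cone to `epi f` at `(x, f x)`: there are sequences `t_n ↘ 0`,
`u_n → d`, `v_n → −μ` with `(x, f x) + t_n (u_n, v_n) ∈ epi f` for all `n`. -/
theorem mem_tangentCone_epigraph
    (f : X → ℝ) (xbar d : X) (μ : ℝ) (hμ : 0 < μ)
    (hf : LocallyLipschitzAt f xbar)
    (hdd : clarkeDirDeriv f xbar d < -μ) :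
    ∃ δ > (0 : ℝ), ∀ x ∈ Metric.closedBall xbar δ,
      ∃ (t : ℕ → ℝ) (u : ℕ → X) (v : ℕ → ℝ),
        (∀ n, 0 < t n) ∧ Antitone t ∧ Tendsto t atTop (𝓝 0) ∧
        Tendsto u atTop (𝓝 d) ∧ Tendsto v atTop (𝓝 (-μ)) ∧
        ∀ n, f (x + t n • u n) ≤ f x + t n * v n :=
  mem_tangentCone_epigraph_general f xbar d μ hf hdd
end

section
/- Let X be a real Hilbert space and let x, x', p ∈ X. Set x̃ := (2/3)·x' + (1/3)·x. If ⟨x − x̃, p − x̃⟩ ≤ 0, then ‖x' − p‖² ≤ ‖x − p‖² − (1/3)·‖x' − x‖². -/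
open scoped RealInnerProductSpace

/-! The inequality is an exact identity up to the obtuse-angle term:
`‖x' - p‖² = ‖x - p‖² - (1/3)‖x' - x‖² + 3⟪x - x̃, p - x̃⟫`. It follows by writing `x - p` and
`x' - p` as `x̃ - p` plus multiples of `x' - x`; the computation works for any point
`t x' + (1 - t) x` of the line through `x` and `x'`. -/

theorem mul_norm_sub_sq_sub_norm_sub_sq {X : Type*} [NormedAddCommGroup X]
    [InnerProductSpace ℝ X] (x x' p : X) (t : ℝ) :
    t * (‖x' - p‖ ^ 2 - ‖x - p‖ ^ 2) =
      t * (1 - 2 * t) * ‖x' - x‖ ^ 2 +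
        2 * ⟪x - (t • x' + (1 - t) • x), p - (t • x' + (1 - t) • x)⟫ := by
  set v := x' - x
  set d := t • x' + (1 - t) • x - p
  have hx : x - p = d - t • v := by simp only [d, v, smul_sub, sub_smul, one_smul]; abel
  have hx' : x' - p = d + (1 - t) • v := by simp only [d, v, smul_sub, sub_smul, one_smul]; abel
  have hc : x - (t • x' + (1 - t) • x) = -(t • v) := by
    simp only [v, smul_sub, sub_smul, one_smul]; abel
  have hp : p - (t • x' + (1 - t) • x) = -d := by simp only [d]; abel
  clear_value v d
  rw [hx, hx', hc, hp, inner_neg_neg, real_inner_smul_left, norm_add_sq_real, norm_sub_sq_real,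
    real_inner_smul_right, real_inner_smul_right, norm_smul, norm_smul, real_inner_comm d v]
  simp only [Real.norm_eq_abs, mul_pow, sq_abs]
  ring

theorem dist_sq_decrease_of_obtuse_general
    {X : Type*} [NormedAddCommGroup X] [InnerProductSpace ℝ X]
    (x x' p : X)
    (h : ⟪x - ((2 / 3 : ℝ) • x' + (1 / 3 : ℝ) • x),
          p - ((2 / 3 : ℝ) • x' + (1 / 3 : ℝ) • x)⟫ ≤ 0) :
    ‖x' - p‖ ^ 2 ≤ ‖x - p‖ ^ 2 - (1 / 3) * ‖x' - x‖ ^ 2 := by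
  have key := mul_norm_sub_sq_sub_norm_sub_sq x x' p (2 / 3)
  norm_num only at key
  linarith

/-- If `x̃ = (2/3) x' + (1/3) x` and `⟪x − x̃, p − x̃⟫ ≤ 0`, then
`‖x' − p‖² ≤ ‖x − p‖² − (1/3)‖x' − x‖²`. -/
theorem dist_sq_decrease_of_obtuse
    {X : Type*} [NormedAddCommGroup X] [InnerProductSpace ℝ X] [CompleteSpace X]
    (x x' p : X)
    (h : ⟪x - ((2 / 3 : ℝ) • x' + (1 / 3 : ℝ) • x),
          p - ((2 / 3 : ℝ) • x' + (1 / 3 : ℝ) • x)⟫ ≤ 0) :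
    ‖x' - p‖ ^ 2 ≤ ‖x - p‖ ^ 2 - (1 / 3) * ‖x' - x‖ ^ 2 :=
  dist_sq_decrease_of_obtuse_general x x' p h
end

section
/- Let X be a real Hilbert space, let f : X → ℝ, let x, p ∈ X, s ∈ X, and let ε > 0, ε_ac ≥ 0, κ ≥ 0 with κ·ε_ac ≤ 1/3. Suppose f(p) = −ε, the approximate-convexity inequality f(p) ≥ f(x) + ⟨s, p − x⟩ − ε_ac·‖p − x‖ holds, and ‖x − p‖ ≤ κ·(f(x) + ε) with f(x) + ε > 0. Then ⟨s, p − x⟩ ≤ −(1 − κ·ε_ac)·(ε + f(x)) ≤ −(2/3)·(ε + f(x)); in particular, if s ≠ 0 and x̃ := x − (2/3)·((ε + f(x))/‖s‖²)·s, then ⟨s, p − x̃⟩ ≤ 0. -/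
open scoped RealInnerProductSpace

section

variable {X : Type*} [NormedAddCommGroup X] [InnerProductSpace ℝ X]

theorem inner_sub_sub_div_norm_sq_smul {s : X} (hs : s ≠ 0) (p x : X) (a : ℝ) :
    ⟪s, p - (x - (a / ‖s‖ ^ 2) • s)⟫ = ⟪s, p - x⟫ + a := by
  have hs2 : ‖s‖ ^ 2 ≠ 0 := pow_ne_zero 2 (norm_ne_zero_iff.mpr hs)
  rw [sub_sub_eq_add_sub, add_sub_right_comm, inner_add_right, real_inner_smul_right,
    real_inner_self_eq_norm_sq, div_mul_cancel₀ a hs2]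

theorem inner_sub_le_of_approx_convex {f : X → ℝ} {x p s : X} {εac κ : ℝ} (hac : 0 ≤ εac)
    (happrox : f x + ⟪s, p - x⟫ - εac * ‖p - x‖ ≤ f p)
    (hdist : ‖x - p‖ ≤ κ * (f x - f p)) :
    ⟪s, p - x⟫ ≤ -(1 - κ * εac) * (f x - f p) := by
  have hdist' : εac * ‖p - x‖ ≤ εac * (κ * (f x - f p)) := by
    rw [norm_sub_rev]
    exact mul_le_mul_of_nonneg_left hdist hac
  linarith

end

theorem inner_le_of_approx_convex_general
    {X : Type*} [NormedAddCommGroup X] [InnerProductSpace ℝ X]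
    (f : X → ℝ) (x p s : X) (ε εac κ : ℝ)
    (hac : 0 ≤ εac) (hκac : κ * εac ≤ 1 / 3)
    (hp : f p = -ε)
    (happrox : f x + ⟪s, p - x⟫ - εac * ‖p - x‖ ≤ f p)
    (hdist : ‖x - p‖ ≤ κ * (f x + ε)) (hfx : 0 < f x + ε) :
    ⟪s, p - x⟫ ≤ -(1 - κ * εac) * (ε + f x) ∧
    -(1 - κ * εac) * (ε + f x) ≤ -(2 / 3) * (ε + f x) ∧
    (s ≠ 0 →
      ⟪s, p - (x - ((2 / 3) * ((ε + f x) / ‖s‖ ^ 2)) • s)⟫ ≤ 0) := by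
  have hgap : f x - f p = ε + f x := by rw [hp]; ring
  have hinner : ⟪s, p - x⟫ ≤ -(1 - κ * εac) * (ε + f x) := by
    rw [← hgap]
    exact inner_sub_le_of_approx_convex hac happrox (hdist.trans_eq (by rw [hgap, add_comm]))
  have hfactor : -(1 - κ * εac) * (ε + f x) ≤ -(2 / 3) * (ε + f x) := by
    rw [neg_mul, neg_mul, neg_le_neg_iff, add_comm ε]
    exact mul_le_mul_of_nonneg_right (by linarith) hfx.le
  refine ⟨hinner, hfactor, fun hs => ?_⟩
  rw [← mul_div_assoc, inner_sub_sub_div_norm_sq_smul hs]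
  linarith

/-- Suppose `f p = −ε`, the approximate-convexity inequality
`f p ≥ f x + ⟪s, p − x⟫ − ε_ac ‖p − x‖` holds, `‖x − p‖ ≤ κ (f x + ε)` with
`f x + ε > 0`, and `κ ε_ac ≤ 1/3`. Then
`⟪s, p − x⟫ ≤ −(1 − κ ε_ac)(ε + f x) ≤ −(2/3)(ε + f x)`; in particular, if `s ≠ 0` and
`x̃ = x − (2/3)((ε + f x)/‖s‖²) s`, then `⟪s, p − x̃⟫ ≤ 0`. -/
theorem inner_le_of_approx_convex
    {X : Type*} [NormedAddCommGroup X] [InnerProductSpace ℝ X] [CompleteSpace X]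
    (f : X → ℝ) (x p s : X) (ε εac κ : ℝ)
    (hε : 0 < ε) (hac : 0 ≤ εac) (hκ : 0 ≤ κ) (hκac : κ * εac ≤ 1 / 3)
    (hp : f p = -ε)
    (happrox : f x + ⟪s, p - x⟫ - εac * ‖p - x‖ ≤ f p)
    (hdist : ‖x - p‖ ≤ κ * (f x + ε)) (hfx : 0 < f x + ε) :
    ⟪s, p - x⟫ ≤ -(1 - κ * εac) * (ε + f x) ∧
    -(1 - κ * εac) * (ε + f x) ≤ -(2 / 3) * (ε + f x) ∧
    (s ≠ 0 →
      ⟪s, p - (x - ((2 / 3) * ((ε + f x) / ‖s‖ ^ 2)) • s)⟫ ≤ 0) :=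
  inner_le_of_approx_convex_general f x p s ε εac κ hac hκac hp happrox hdist hfx
end

section
/- Let X be a real Hilbert space, let f : X → ℝ, let ε > 0, ε_ac ≥ 0, κ > 0 with κ·ε_ac ≤ 1/3. Let x ∈ X with f(x) > 0, let s^{(1)}, …, s^{(J)} ∈ X be nonzero vectors, set L := max_{j} ‖s^{(j)}‖, and let P := {x' ∈ X : f(x) + ⟨s^{(j)}, x' − x⟩ ≤ −ε for all j ∈ {1,…,J}}. Assume P is nonempty, let x⁺ be the metric projection of x onto P, and let p ∈ X satisfy f(p) = −ε, ‖x − p‖ ≤ κ·(f(x) + ε), and the approximate-convexity inequalities f(p) ≥ f(x) + ⟨s^{(j)}, p − x⟩ − ε_ac·‖p − x‖ for all j. Then ‖x⁺ − p‖² ≤ (1 − 1/(3·κ²·L²))·‖x − p‖². -/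
open Set
open scoped RealInnerProductSpace

/-!
Overshooting `p` by the factor `3/2` along the ray from `x` still satisfies every cut, because
approximate convexity makes each cut hold at `p` with slack `εac ‖p - x‖ ≤ (f x + ε) / 3`. The
variational inequality of the projection at `q = x + (3/2)(p - x)` then gives
`‖x⁺ - p‖² ≤ ‖x - p‖² - ‖x - x⁺‖² / 3`, while `x⁺` lies in the halfspace of the cut with the
longest normal, so `f x + ε ≤ L ‖x - x⁺‖` and hence `‖x - p‖ ≤ κ L ‖x - x⁺‖`.
-/

section

variable {X : Type*} [NormedAddCommGroup X] [InnerProductSpace ℝ X]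

theorem convex_setOf_forall_add_inner_sub_le {ι : Type*} (s : ι → X) (x : X) (a b : ℝ) :
    Convex ℝ {y : X | ∀ j, a + ⟪s j, y - x⟫ ≤ b} := by
  rw [ofPred_forall]
  refine convex_iInter fun j => ?_
  have hcut : {y : X | a + ⟪s j, y - x⟫ ≤ b} = {y | ⟪s j, y⟫ ≤ b - a + ⟪s j, x⟫} := by
    ext y
    simp only [mem_ofPred_eq, inner_sub_right]
    constructor <;> intro h <;> linarith
  exact hcut ▸ convex_halfSpace_le (innerₛₗ ℝ (s j)).isLinear _

theorem real_inner_sub_le_zero_of_forall_dist_le {K : Set X} (hK : Convex ℝ K) {x y : X}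
    (hy : y ∈ K) (hmin : ∀ w ∈ K, dist x y ≤ dist x w) : ∀ w ∈ K, ⟪x - y, w - y⟫ ≤ 0 := by
  refine (norm_eq_iInf_iff_real_inner_le_zero hK hy).mp ?_
  have : Nonempty K := ⟨⟨y, hy⟩⟩
  refine (IsLeast.isGLB (s := range fun w : K => ‖x - w‖) ⟨⟨⟨y, hy⟩, rfl⟩, ?_⟩).ciInf_eq.symm
  rintro _ ⟨w, rfl⟩
  simpa only [dist_eq_norm] using hmin w w.2

theorem norm_sub_sq_le_of_real_inner_le_zero {x y p : X} {c : ℝ} (hc : 0 < c)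
    (h : ⟪x - y, x + c • (p - x) - y⟫ ≤ 0) :
    ‖y - p‖ ^ 2 ≤ ‖x - p‖ ^ 2 - (2 / c - 1) * ‖x - y‖ ^ 2 := by
  have hsplit : x + c • (p - x) - y = (x - y) - c • (x - p) := by module
  rw [hsplit, inner_sub_right, real_inner_smul_right, real_inner_self_eq_norm_sq] at h
  have hexp : ‖y - p‖ ^ 2 = ‖x - p‖ ^ 2 - 2 * ⟪x - y, x - p⟫ + ‖x - y‖ ^ 2 := by
    rw [show y - p = (x - p) - (x - y) by abel, norm_sub_sq_real, real_inner_comm]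
  have hinner : 2 / c * ‖x - y‖ ^ 2 ≤ 2 * ⟪x - y, x - p⟫ := by
    rw [div_mul_eq_mul_div, div_le_iff₀ hc]; linarith
  linarith

theorem sub_le_norm_mul_norm_of_add_inner_le {s x y : X} {a b : ℝ} (h : a + ⟪s, y - x⟫ ≤ b) :
    a - b ≤ ‖s‖ * ‖x - y‖ := by
  have hneg : ⟪s, x - y⟫ = -⟪s, y - x⟫ := by rw [← inner_neg_right, neg_sub]
  linarith [real_inner_le_norm s (x - y)]

theorem add_inner_stretch_sub_le {s x p : X} {a ε εac κ : ℝ} (hac : 0 ≤ εac)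
    (hκac : κ * εac ≤ 1 / 3) (hgap : 0 ≤ a + ε) (hpd : ‖x - p‖ ≤ κ * (a + ε))
    (h : a + ⟪s, p - x⟫ - εac * ‖p - x‖ ≤ -ε) :
    a + ⟪s, x + (3 / 2 : ℝ) • (p - x) - x⟫ ≤ -ε := by
  have hslack : εac * ‖p - x‖ ≤ (a + ε) / 3 :=
    calc εac * ‖p - x‖ ≤ εac * (κ * (a + ε)) := by rw [norm_sub_rev]; gcongr
      _ = (κ * εac) * (a + ε) := by ring
      _ ≤ 1 / 3 * (a + ε) := by gcongr
      _ = (a + ε) / 3 := by ring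
  rw [add_sub_cancel_left, real_inner_smul_right]
  linarith

end

theorem proj_step_linear_decrease_general
    {X : Type*} [NormedAddCommGroup X] [InnerProductSpace ℝ X]
    (f : X → ℝ) (ε εac κ L : ℝ) (hac : 0 ≤ εac)
    (hκ : 0 < κ) (hκac : κ * εac ≤ 1 / 3)
    (x : X)
    (J : ℕ) (s : Fin J → X)
    (hL_mem : ∃ j, ‖s j‖ = L)
    (xp : X) (hxpP : xp ∈ {x' : X | ∀ j, f x + ⟪s j, x' - x⟫ ≤ -ε})
    (hproj : ∀ y ∈ {x' : X | ∀ j, f x + ⟪s j, x' - x⟫ ≤ -ε}, dist x xp ≤ dist x y)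
    (p : X) (hp : f p = -ε) (hpd : ‖x - p‖ ≤ κ * (f x + ε))
    (happrox : ∀ j, f x + ⟪s j, p - x⟫ - εac * ‖p - x‖ ≤ f p) :
    ‖xp - p‖ ^ 2 ≤ (1 - 1 / (3 * κ ^ 2 * L ^ 2)) * ‖x - p‖ ^ 2 := by
  obtain ⟨j₀, rfl⟩ := hL_mem
  have hgap : 0 ≤ f x + ε := nonneg_of_mul_nonneg_right ((norm_nonneg _).trans hpd) hκ
  have hstretch : x + (3 / 2 : ℝ) • (p - x) ∈ {x' : X | ∀ j, f x + ⟪s j, x' - x⟫ ≤ -ε} :=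
    fun j => add_inner_stretch_sub_le hac hκac hgap hpd (hp ▸ happrox j)
  have hdesc := norm_sub_sq_le_of_real_inner_le_zero (by norm_num : (0 : ℝ) < 3 / 2)
    (real_inner_sub_le_zero_of_forall_dist_le
      (convex_setOf_forall_add_inner_sub_le s x (f x) (-ε)) hxpP hproj _ hstretch)
  have hcut : f x + ε ≤ ‖s j₀‖ * ‖x - xp‖ := by
    simpa only [sub_neg_eq_add] using sub_le_norm_mul_norm_of_add_inner_le (hxpP j₀)
  have hratio : ‖x - p‖ / (κ * ‖s j₀‖) ≤ ‖x - xp‖ :=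
    div_le_of_le_mul₀ (by positivity) (norm_nonneg _) <|
      hpd.trans (by rw [mul_comm _ (κ * _), mul_assoc]; gcongr)
  calc ‖xp - p‖ ^ 2 ≤ ‖x - p‖ ^ 2 - ‖x - xp‖ ^ 2 / 3 := by linarith
    _ ≤ ‖x - p‖ ^ 2 - (‖x - p‖ / (κ * ‖s j₀‖)) ^ 2 / 3 := by gcongr
    _ = (1 - 1 / (3 * κ ^ 2 * ‖s j₀‖ ^ 2)) * ‖x - p‖ ^ 2 := by ring

/-- **Linear decrease of the distance to the sublevel set.** With `f x > 0`, nonzero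
vectors `s 1, …, s J` with `L = max j, ‖s j‖`, the nonempty polyhedron
`P = {x' : f x + ⟪s j, x' − x⟫ ≤ −ε for all j}`, `x⁺` the metric projection of `x`
onto `P`, and `p` with `f p = −ε`, `‖x − p‖ ≤ κ (f x + ε)` satisfying the
approximate-convexity inequalities (`κ ε_ac ≤ 1/3`, `κ > 0`), one has
`‖x⁺ − p‖² ≤ (1 − 1/(3 κ² L²)) ‖x − p‖²`. -/
theorem proj_step_linear_decrease
    {X : Type*} [NormedAddCommGroup X] [InnerProductSpace ℝ X] [CompleteSpace X]
    (f : X → ℝ) (ε εac κ L : ℝ) (hε : 0 < ε) (hac : 0 ≤ εac)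
    (hκ : 0 < κ) (hκac : κ * εac ≤ 1 / 3)
    (x : X) (hfx : 0 < f x)
    (J : ℕ) (hJ : 0 < J) (s : Fin J → X) (hs : ∀ j, s j ≠ 0)
    (hL_ub : ∀ j, ‖s j‖ ≤ L) (hL_mem : ∃ j, ‖s j‖ = L)
    (hPne : Set.Nonempty {x' : X | ∀ j, f x + ⟪s j, x' - x⟫ ≤ -ε})
    (xp : X) (hxpP : xp ∈ {x' : X | ∀ j, f x + ⟪s j, x' - x⟫ ≤ -ε})
    (hproj : ∀ y ∈ {x' : X | ∀ j, f x + ⟪s j, x' - x⟫ ≤ -ε}, dist x xp ≤ dist x y)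
    (p : X) (hp : f p = -ε) (hpd : ‖x - p‖ ≤ κ * (f x + ε))
    (happrox : ∀ j, f x + ⟪s j, p - x⟫ - εac * ‖p - x‖ ≤ f p) :
    ‖xp - p‖ ^ 2 ≤ (1 - 1 / (3 * κ ^ 2 * L ^ 2)) * ‖x - p‖ ^ 2 :=
  proj_step_linear_decrease_general f ε εac κ L hac hκ hκac x J s hL_mem xp hxpP hproj p hp hpd
    happrox
end
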